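/- arXiv:2407.16996 — 6 statements merged into one kernel-verified Lean document; each statement's English description precedes it below -/
import Mathlib

section
/- The canonical continuous map φ : X/∼_f → X ∪_f Y is injective. -/
/-- The equivalence relation `∼_f` on `X`: `x ∼_f x'` iff `x = x'`, or both lie in `A`
and have the same image under `f`. -/
def glueRel {X Y : Type} (A : Set X) (f : A → Y) : X → X → Prop :=
  fun x x' => x = x' ∨ ∃ (hx : x ∈ A) (hx' : x' ∈ A), f ⟨x, hx⟩ = f ⟨x', hx'⟩

/-- The relation on `X ⊕ Y` generating the adjunction-space identifications:
each `a ∈ A` is identified with `f a ∈ Y`.  The adjunction space `X ∪_f Y` is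
`Quot (adjRel A f)`, the quotient by the smallest equivalence relation containing it. -/
def adjRel {X Y : Type} (A : Set X) (f : A → Y) : X ⊕ Y → X ⊕ Y → Prop :=
  fun p q => ∃ a : A, p = Sum.inl (a : X) ∧ q = Sum.inr (f a)

/-! Send every point of `A ⊆ X` to its image under `f` and leave all other points alone.
This normal form is constant on the generating identifications of `X ∪_f Y`, hence on its
classes, and two points of `X` have the same normal form exactly when they are `∼_f`-related. -/

open Classical in
noncomputable def adjNormalForm {X Y : Type} (A : Set X) (f : A → Y) : X ⊕ Y → X ⊕ Y
  | Sum.inl x => if hx : x ∈ A then Sum.inr (f ⟨x, hx⟩) else Sum.inl x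
  | Sum.inr y => Sum.inr y

section

variable {X Y : Type} (A : Set X) (f : A → Y)

lemma adjNormalForm_eq_of_adjRel {p q : X ⊕ Y} (h : adjRel A f p q) :
    adjNormalForm A f p = adjNormalForm A f q := by
  obtain ⟨a, rfl, rfl⟩ := h
  simp [adjNormalForm, a.2]

lemma glueRel_of_adjNormalForm_inl_eq {x x' : X}
    (h : adjNormalForm A f (Sum.inl x) = adjNormalForm A f (Sum.inl x')) : glueRel A f x x' := by
  by_cases hx : x ∈ A <;> by_cases hx' : x' ∈ A <;>
    simp_all [adjNormalForm, glueRel]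

lemma glueRel_of_quot_mk_inl_eq {x x' : X}
    (h : Quot.mk (adjRel A f) (Sum.inl x) = Quot.mk (adjRel A f) (Sum.inl x')) :
    glueRel A f x x' :=
  glueRel_of_adjNormalForm_inl_eq A f
    (congrArg (Quot.lift (adjNormalForm A f) fun _ _ => adjNormalForm_eq_of_adjRel A f) h)

end

theorem stmt0_general {X Y : Type}
    (A : Set X) (f : A → Y)
    (φ : Quot (glueRel A f) → Quot (adjRel A f))
    (hφ : ∀ x : X, φ (Quot.mk (glueRel A f) x) = Quot.mk (adjRel A f) (Sum.inl x)) :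
    Function.Injective φ := by
  rintro ⟨x⟩ ⟨x'⟩ h
  rw [hφ, hφ] at h
  exact Quot.sound (glueRel_of_quot_mk_inl_eq A f h)

/-- the canonical continuous map `φ : X/∼_f → X ∪_f Y`
(the unique continuous map with `φ ∘ p = q ∘ i_X`) is injective. -/
theorem stmt0 {X Y : Type} [TopologicalSpace X] [TopologicalSpace Y]
    (A : Set X) (f : A → Y) (hf : Continuous f)
    (φ : Quot (glueRel A f) → Quot (adjRel A f))
    (hφcont : Continuous φ)
    (hφ : ∀ x : X, φ (Quot.mk (glueRel A f) x) = Quot.mk (adjRel A f) (Sum.inl x)) :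
    Function.Injective φ :=
  stmt0_general A f φ hφ
end

section
/- For every subset S of X/∼_f, regarding X and Y as subsets of X ⊔ Y via i_X and i_Y, the following two identities hold: q⁻¹(φ(S)) ∩ X = i_X⁻¹(q⁻¹(φ(S))) = p⁻¹(φ⁻¹(φ(S))), and q⁻¹(φ(S)) ∩ Y = f(p⁻¹(S) ∩ A). -/
/-! Everything reduces to knowing when a point `x` of `X` is glued to a point `y` of `Y`: exactly
when `x ∈ A` and `f x = y`. For the nontrivial direction, the set of points of `Y` that
`p ∈ X ⊕ Y` is glued to, namely `f(A ∩ {x})` for `p = x` and `{y}` for `p = y`, is invariant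
under `adjRel` and therefore descends to the quotient. -/

section AdjunctionSpace

variable {X Y : Type} {A : Set X} {f : A → Y}

theorem adjRel_mk_inl_eq_mk_inr_iff {x : X} {y : Y} :
    Quot.mk (adjRel A f) (.inl x) = Quot.mk _ (.inr y) ↔ ∃ a : A, (a : X) = x ∧ f a = y := by
  constructor
  · intro h
    let gluedTo : X ⊕ Y → Set Y := Sum.elim (fun x => f '' {a | (a : X) = x}) singleton
    have gluedTo_respects : ∀ p q, adjRel A f p q → gluedTo p = gluedTo q := by
      rintro _ _ ⟨a, rfl, rfl⟩
      simp [gluedTo, Subtype.coe_inj]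
    have hy : y ∈ Quot.lift gluedTo gluedTo_respects (Quot.mk _ (.inl x)) := by
      rw [h]; rfl
    simpa [gluedTo] using hy
  · rintro ⟨a, rfl, rfl⟩
    exact Quot.sound ⟨a, rfl, rfl⟩

theorem inr_preimage_mk_preimage_image_eq {φ : Quot (glueRel A f) → Quot (adjRel A f)}
    (hφ : ∀ x : X, φ (Quot.mk (glueRel A f) x) = Quot.mk (adjRel A f) (Sum.inl x))
    (S : Set (Quot (glueRel A f))) :
    Sum.inr ⁻¹' (Quot.mk (adjRel A f) ⁻¹' (φ '' S))
      = f '' (Subtype.val ⁻¹' (Quot.mk (glueRel A f) ⁻¹' S)) := by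
  ext y
  constructor
  · rintro ⟨s, hs, hφs⟩
    obtain ⟨x, rfl⟩ := Quot.exists_rep s
    obtain ⟨a, rfl, hay⟩ := adjRel_mk_inl_eq_mk_inr_iff.mp ((hφ x).symm.trans hφs)
    exact ⟨a, hs, hay⟩
  · rintro ⟨a, hs, rfl⟩
    exact ⟨_, hs, (hφ a).trans (adjRel_mk_inl_eq_mk_inr_iff.mpr ⟨a, rfl, rfl⟩)⟩

end AdjunctionSpace

theorem stmt2_general {X Y : Type}
    (A : Set X) (f : A → Y)
    (φ : Quot (glueRel A f) → Quot (adjRel A f))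
    (hφ : ∀ x : X, φ (Quot.mk (glueRel A f) x) = Quot.mk (adjRel A f) (Sum.inl x))
    (S : Set (Quot (glueRel A f))) :
    (Quot.mk (adjRel A f) ⁻¹' (φ '' S) ∩ Set.range (Sum.inl : X → X ⊕ Y)
        = Sum.inl '' (Sum.inl ⁻¹' (Quot.mk (adjRel A f) ⁻¹' (φ '' S)))) ∧
    (Sum.inl ⁻¹' (Quot.mk (adjRel A f) ⁻¹' (φ '' S))
        = Quot.mk (glueRel A f) ⁻¹' (φ ⁻¹' (φ '' S))) ∧
    (Sum.inr ⁻¹' (Quot.mk (adjRel A f) ⁻¹' (φ '' S))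
        = f '' (Subtype.val ⁻¹' (Quot.mk (glueRel A f) ⁻¹' S))) := by
  refine ⟨Set.image_preimage_eq_inter_range.symm, ?_, inr_preimage_mk_preimage_image_eq hφ S⟩
  ext x
  simp only [Set.mem_preimage, hφ x]

/-- for every subset `S` of `X/∼_f`, regarding `X` and `Y` as subsets of
`X ⊔ Y` via `i_X = Sum.inl` and `i_Y = Sum.inr`:
`q⁻¹(φ(S)) ∩ X = i_X⁻¹(q⁻¹(φ(S))) = p⁻¹(φ⁻¹(φ(S)))` and
`q⁻¹(φ(S)) ∩ Y = f(p⁻¹(S) ∩ A)`. -/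
theorem stmt2 {X Y : Type} [TopologicalSpace X] [TopologicalSpace Y]
    (A : Set X) (f : A → Y) (hf : Continuous f)
    (φ : Quot (glueRel A f) → Quot (adjRel A f))
    (hφcont : Continuous φ)
    (hφ : ∀ x : X, φ (Quot.mk (glueRel A f) x) = Quot.mk (adjRel A f) (Sum.inl x))
    (S : Set (Quot (glueRel A f))) :
    (Quot.mk (adjRel A f) ⁻¹' (φ '' S) ∩ Set.range (Sum.inl : X → X ⊕ Y)
        = Sum.inl '' (Sum.inl ⁻¹' (Quot.mk (adjRel A f) ⁻¹' (φ '' S)))) ∧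
    (Sum.inl ⁻¹' (Quot.mk (adjRel A f) ⁻¹' (φ '' S))
        = Quot.mk (glueRel A f) ⁻¹' (φ ⁻¹' (φ '' S))) ∧
    (Sum.inr ⁻¹' (Quot.mk (adjRel A f) ⁻¹' (φ '' S))
        = f '' (Subtype.val ⁻¹' (Quot.mk (glueRel A f) ⁻¹' S))) :=
  stmt2_general A f φ hφ S
end

section
/- If f : A → Y is surjective, A is closed in X, and f is a closed map, then the canonical continuous map φ : X/∼_f → X ∪_f Y is a homeomorphism. -/
open Function

theorem continuous_comp_surjInv_of_isClosedMap {α β γ : Type*} [TopologicalSpace α]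
    [TopologicalSpace β] [TopologicalSpace γ] {f : α → β} (hf : IsClosedMap f)
    (hsurj : Surjective f) {h : α → γ} (hh : Continuous h)
    (hfib : ∀ a b, f a = f b → h a = h b) : Continuous (h ∘ surjInv hsurj) := by
  refine continuous_iff_isClosed.mpr fun C hC => ?_
  have hpre : h ∘ surjInv hsurj ⁻¹' C = f '' (h ⁻¹' C) := by
    ext y
    constructor
    · intro hy
      exact ⟨surjInv hsurj y, hy, surjInv_eq hsurj y⟩
    · rintro ⟨a, ha, rfl⟩
      rwa [Set.mem_preimage, comp_apply, hfib _ _ (surjInv_eq hsurj (f a))]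
  rw [hpre]
  exact hf _ (hC.preimage hh)

section AdjunctionSpace

variable {X Y : Type} {A : Set X} {f : A → Y}

theorem glueRel_of_apply_eq {a b : A} (h : f a = f b) : glueRel A f a b :=
  Or.inr ⟨a.2, b.2, h⟩

theorem adjRel_mk_inr_eq (hsurj : Surjective f) (y : Y) :
    Quot.mk (adjRel A f) (Sum.inr y) =
      Quot.mk (adjRel A f) (Sum.inl ((surjInv hsurj y : A) : X)) :=
  (Quot.sound ⟨surjInv hsurj y, rfl, by rw [surjInv_eq hsurj y]⟩).symm

noncomputable def adjToGlue (hsurj : Surjective f) : Quot (adjRel A f) → Quot (glueRel A f) :=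
  Quot.lift (Sum.elim (Quot.mk _) fun y => Quot.mk _ ((surjInv hsurj y : A) : X)) <| by
    rintro _ _ ⟨a, rfl, rfl⟩
    exact Quot.sound (glueRel_of_apply_eq (surjInv_eq hsurj (f a)).symm)

theorem leftInverse_adjToGlue (hsurj : Surjective f)
    {φ : Quot (glueRel A f) → Quot (adjRel A f)}
    (hφ : ∀ x : X, φ (Quot.mk (glueRel A f) x) = Quot.mk (adjRel A f) (Sum.inl x)) :
    LeftInverse (adjToGlue hsurj) φ :=
  Quot.ind fun x => by rw [hφ]; rfl

theorem rightInverse_adjToGlue (hsurj : Surjective f)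
    {φ : Quot (glueRel A f) → Quot (adjRel A f)}
    (hφ : ∀ x : X, φ (Quot.mk (glueRel A f) x) = Quot.mk (adjRel A f) (Sum.inl x)) :
    RightInverse (adjToGlue hsurj) φ := by
  refine Quot.ind fun z => ?_
  cases z with
  | inl x => exact hφ x
  | inr y => exact (hφ _).trans (adjRel_mk_inr_eq hsurj y).symm

theorem continuous_adjToGlue [TopologicalSpace X] [TopologicalSpace Y] (hsurj : Surjective f)
    (hclosed : IsClosedMap f) : Continuous (adjToGlue hsurj) := by
  refine continuous_quot_lift _ (continuous_quot_mk.sumElim ?_)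
  exact continuous_comp_surjInv_of_isClosedMap hclosed hsurj
    (continuous_quot_mk.comp continuous_subtype_val)
    fun a b hab => Quot.sound (glueRel_of_apply_eq hab)

end AdjunctionSpace

theorem stmt3_general {X Y : Type} [TopologicalSpace X] [TopologicalSpace Y]
    (A : Set X) (f : A → Y)
    (hfsurj : Function.Surjective f)
    (hfclosed : IsClosedMap f)
    (φ : Quot (glueRel A f) → Quot (adjRel A f))
    (hφcont : Continuous φ)
    (hφ : ∀ x : X, φ (Quot.mk (glueRel A f) x) = Quot.mk (adjRel A f) (Sum.inl x)) :
    IsHomeomorph φ :=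
  isHomeomorph_iff_exists_inverse.mpr ⟨hφcont, adjToGlue hfsurj,
    leftInverse_adjToGlue hfsurj hφ, rightInverse_adjToGlue hfsurj hφ,
    continuous_adjToGlue hfsurj hfclosed⟩

/-- if `f : A → Y` is surjective, `A` is closed in `X` and `f` is a closed
map, then the canonical continuous map `φ : X/∼_f → X ∪_f Y` is a homeomorphism. -/
theorem stmt3 {X Y : Type} [TopologicalSpace X] [TopologicalSpace Y]
    (A : Set X) (f : A → Y) (hf : Continuous f)
    (hfsurj : Function.Surjective f)
    (hAclosed : IsClosed A)
    (hfclosed : IsClosedMap f)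
    (φ : Quot (glueRel A f) → Quot (adjRel A f))
    (hφcont : Continuous φ)
    (hφ : ∀ x : X, φ (Quot.mk (glueRel A f) x) = Quot.mk (adjRel A f) (Sum.inl x)) :
    IsHomeomorph φ :=
  stmt3_general A f hfsurj hfclosed φ hφcont hφ
end

section
/- If f : A → Y is surjective and Y is a discrete topological space, then the canonical continuous map φ : X/∼_f → X ∪_f Y is a homeomorphism. -/
/-!
A section `s` of `f` gives an inverse to `φ`: send `[x]` to `[x]` and `[y]` to `[s y]`; this
respects the adjunction identifications because `a ∼_f s (f a)`. It is continuous as soon as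
`y ↦ s y` is, which is automatic when `Y` is discrete.
-/

namespace AdjunctionSpace

variable {X Y : Type} {A : Set X} {f : A → Y}

theorem glueRel_of_apply_eq {a b : A} (h : f a = f b) : glueRel A f a b :=
  Or.inr ⟨a.2, b.2, h⟩

def toGlueQuot (s : Y → A) (hs : ∀ y, f (s y) = y) : Quot (adjRel A f) → Quot (glueRel A f) :=
  Quot.lift (Sum.elim (Quot.mk _) fun y => Quot.mk _ (s y : X)) <| by
    rintro _ _ ⟨a, rfl, rfl⟩
    exact Quot.sound (glueRel_of_apply_eq (hs (f a)).symm)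

variable (s : Y → A) (hs : ∀ y, f (s y) = y)

theorem continuous_toGlueQuot [TopologicalSpace X] [TopologicalSpace Y]
    (hs_cont : Continuous fun y => (s y : X)) : Continuous (toGlueQuot s hs) :=
  continuous_quot_lift _ (continuous_quot_mk.sumElim (continuous_quot_mk.comp hs_cont))

variable {φ : Quot (glueRel A f) → Quot (adjRel A f)}
  (hφ : ∀ x : X, φ (Quot.mk (glueRel A f) x) = Quot.mk (adjRel A f) (Sum.inl x))
include hs hφ

theorem toGlueQuot_leftInverse : Function.LeftInverse (toGlueQuot s hs) φ := by
  rintro ⟨x⟩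
  exact congrArg (toGlueQuot s hs) (hφ x)

theorem toGlueQuot_rightInverse : Function.RightInverse (toGlueQuot s hs) φ := by
  rintro ⟨x | y⟩
  · exact hφ x
  · calc φ (Quot.mk _ (s y : X)) = Quot.mk _ (Sum.inl (s y : X)) := hφ _
      _ = Quot.mk _ (Sum.inr y) := Quot.sound ⟨s y, rfl, by rw [hs]⟩

theorem isHomeomorph_of_section [TopologicalSpace X] [TopologicalSpace Y]
    (hs_cont : Continuous fun y => (s y : X)) (hφcont : Continuous φ) : IsHomeomorph φ :=
  (Homeomorph.mk ⟨φ, toGlueQuot s hs, toGlueQuot_leftInverse s hs hφ,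
    toGlueQuot_rightInverse s hs hφ⟩ hφcont (continuous_toGlueQuot s hs hs_cont)).isHomeomorph

end AdjunctionSpace

theorem stmt4_general {X Y : Type} [TopologicalSpace X] [TopologicalSpace Y]
    [DiscreteTopology Y]
    (A : Set X) (f : A → Y)
    (hfsurj : Function.Surjective f)
    (φ : Quot (glueRel A f) → Quot (adjRel A f))
    (hφcont : Continuous φ)
    (hφ : ∀ x : X, φ (Quot.mk (glueRel A f) x) = Quot.mk (adjRel A f) (Sum.inl x)) :
    IsHomeomorph φ :=
  AdjunctionSpace.isHomeomorph_of_section (Function.surjInv hfsurj)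
    (Function.surjInv_eq hfsurj) hφ continuous_of_discreteTopology hφcont

/-- if `f : A → Y` is surjective and `Y` is discrete, then the canonical
continuous map `φ : X/∼_f → X ∪_f Y` is a homeomorphism. -/
theorem stmt4 {X Y : Type} [TopologicalSpace X] [TopologicalSpace Y]
    [DiscreteTopology Y]
    (A : Set X) (f : A → Y) (hf : Continuous f)
    (hfsurj : Function.Surjective f)
    (φ : Quot (glueRel A f) → Quot (adjRel A f))
    (hφcont : Continuous φ)
    (hφ : ∀ x : X, φ (Quot.mk (glueRel A f) x) = Quot.mk (adjRel A f) (Sum.inl x)) :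
    IsHomeomorph φ :=
  stmt4_general A f hfsurj φ hφcont hφ
end

section
/- The map θ_1 : H_1(K) → H_1(K̃) induced by the inclusion K ⊆ K̃ is injective. -/
/-- An abstract simplicial complex on a vertex type `α`: a collection of nonempty
finite subsets of `α` closed under passing to nonempty subsets. -/
structure AbsSC (α : Type) where
  faces : Set (Finset α)
  not_empty_mem : ∅ ∉ faces
  down_closed : ∀ {s t : Finset α}, s ∈ faces → t ⊆ s → t.Nonempty → t ∈ faces

namespace AbsSC

variable {α : Type}

/-- The vertex set of an abstract simplicial complex. -/
def vertexSet (K : AbsSC α) : Set α := {v | {v} ∈ K.faces}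

/-- The type of `q`-simplices (faces with `q+1` vertices). -/
def simplices (K : AbsSC α) (q : ℕ) : Type :=
  {s : Finset α // s ∈ K.faces ∧ s.card = q + 1}

/-- The space of `q`-chains over `ℤ/2`: formal sums of `q`-simplices. -/
abbrev Chain (K : AbsSC α) (q : ℕ) : Type := K.simplices q →₀ ZMod 2

/-- The sum of the `q`-dimensional faces of a `(q+1)`-simplex. -/
noncomputable def faceChain (K : AbsSC α) (q : ℕ) (s : K.simplices (q + 1)) : K.Chain q :=
  ∑ t ∈ (s.1.powersetCard (q + 1)).attach,
    Finsupp.single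
      ⟨t.1, by
        obtain ⟨hsub, hcard⟩ := Finset.mem_powersetCard.mp t.2
        refine ⟨K.down_closed s.2.1 hsub ?_, hcard⟩
        rw [← Finset.card_pos, hcard]
        omega⟩
      (1 : ZMod 2)

/-- The boundary map `∂_{q+1} : C_{q+1}(K) → C_q(K)`, sending each `(q+1)`-simplex to
the sum of its `q`-dimensional faces. -/
noncomputable def boundary (K : AbsSC α) (q : ℕ) :
    K.Chain (q + 1) →ₗ[ZMod 2] K.Chain q :=
  Finsupp.lsum (ZMod 2) fun s => LinearMap.toSpanSingleton (ZMod 2) (K.Chain q) (K.faceChain q s)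

/-- The cycle subspace: `ker ∂_q` (all of `C_0` in degree `0`). -/
noncomputable def cycles (K : AbsSC α) : (q : ℕ) → Submodule (ZMod 2) (K.Chain q)
  | 0 => ⊤
  | q + 1 => LinearMap.ker (K.boundary q)

/-- The boundaries, viewed as a submodule of the cycles. -/
noncomputable def boundariesIn (K : AbsSC α) (q : ℕ) :
    Submodule (ZMod 2) (K.cycles q) :=
  Submodule.comap (K.cycles q).subtype (LinearMap.range (K.boundary q))

/-- The `q`-th simplicial homology over `ℤ/2`: `H_q(K) = ker ∂_q / im ∂_{q+1}`. -/
def Homology (K : AbsSC α) (q : ℕ) : Type :=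
  (K.cycles q) ⧸ (K.boundariesIn q)

noncomputable instance (K : AbsSC α) (q : ℕ) : AddCommGroup (K.Homology q) :=
  inferInstanceAs (AddCommGroup ((K.cycles q) ⧸ (K.boundariesIn q)))

noncomputable instance (K : AbsSC α) (q : ℕ) : Module (ZMod 2) (K.Homology q) :=
  inferInstanceAs (Module (ZMod 2) ((K.cycles q) ⧸ (K.boundariesIn q)))

/-- The homology class of a cycle. -/
noncomputable def hClass (K : AbsSC α) (q : ℕ) (c : K.Chain q) (hc : c ∈ K.cycles q) :
    K.Homology q :=
  Submodule.Quotient.mk ⟨c, hc⟩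

/-- The chain map induced by an inclusion of simplicial complexes. -/
noncomputable def chainMap (K L : AbsSC α) (h : K.faces ⊆ L.faces) (q : ℕ) :
    K.Chain q →ₗ[ZMod 2] L.Chain q :=
  Finsupp.lmapDomain (ZMod 2) (ZMod 2) fun s : K.simplices q =>
    (⟨s.1, h s.2.1, s.2.2⟩ : L.simplices q)

/-- `θ` is the map on `q`-th homology induced by the inclusion `K ⊆ L`: it sends the
class of every cycle `c` of `K` to the class of the image chain of `c` in `L`. -/
def InducedHom (K L : AbsSC α) (q : ℕ)
    (θ : K.Homology q →ₗ[ZMod 2] L.Homology q) : Prop :=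
  ∃ h : K.faces ⊆ L.faces,
    ∀ (c : K.Chain q) (hc : c ∈ K.cycles q),
      ∃ hc' : chainMap K L h q c ∈ L.cycles q,
        θ (K.hClass q c hc) = L.hClass q (chainMap K L h q c) hc'

end AbsSC

/-- The faces of the gluing stars `S = S_1 ⊔ ⋯ ⊔ S_k`: for each `j`, the vertex `{z j}`,
the vertices `{v}` for `v ∈ P j`, and the edges `{z j, v}` for `v ∈ P j`. -/
def starFaces {α : Type} [DecidableEq α] {k : ℕ} (P : Fin k → Set α) (z : Fin k → α) :
    Set (Finset α) :=
  {s | ∃ j : Fin k, s = {z j} ∨ ∃ v ∈ P j, s = {v} ∨ s = {z j, v}}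

section Tower

variable {W : ℕ → Type} [∀ i, AddCommGroup (W i)] [∀ i, Module (ZMod 2) (W i)]

/-- The composite `φ_{i,j} = φ_{j-1} ∘ ⋯ ∘ φ_i` of the connecting maps of a tower
(the identity when `i = j`). -/
noncomputable def comps (φ : ∀ i, W i →ₗ[ZMod 2] W (i + 1)) {i j : ℕ} (h : i ≤ j) :
    W i →ₗ[ZMod 2] W j :=
  Nat.leRecOn (C := fun m => W i →ₗ[ZMod 2] W m) h (fun {m} g => (φ m).comp g) LinearMap.id

/-- `s ∈ W b` has persistence interval `(b, d)` with finite death `d ∈ {b+1, …, n}`: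
`s ∉ im φ_{b-1}`, `φ_{b,d'}(s) ∉ im φ_{b-1,d'}` for all `b ≤ d' < d`, and
`φ_{b,d}(s) ∈ im φ_{b-1,d}`. -/
def HasPersIntervalFin (φ : ∀ i, W i →ₗ[ZMod 2] W (i + 1)) (n b d : ℕ) (s : W b) : Prop :=
  ∃ (_ : 1 ≤ b) (hbd : b < d) (_ : d ≤ n),
    s ∉ LinearMap.range (comps φ (Nat.sub_le b 1)) ∧
    (∀ (d' : ℕ) (hd' : b ≤ d'), d' < d →
      comps φ hd' s ∉ LinearMap.range (comps φ (Nat.le_trans (Nat.sub_le b 1) hd'))) ∧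
    comps φ (Nat.le_of_lt hbd) s ∈
      LinearMap.range (comps φ (Nat.le_trans (Nat.sub_le b 1) (Nat.le_of_lt hbd)))

/-- `s ∈ W b` has persistence interval `(b, ∞)`: `s ∉ im φ_{b-1}` and
`φ_{b,d'}(s) ∉ im φ_{b-1,d'}` for all `b ≤ d' ≤ n`. -/
def HasPersIntervalInf (φ : ∀ i, W i →ₗ[ZMod 2] W (i + 1)) (n b : ℕ) (s : W b) : Prop :=
  ∃ _ : 1 ≤ b,
    s ∉ LinearMap.range (comps φ (Nat.sub_le b 1)) ∧
    ∀ (d' : ℕ) (hd' : b ≤ d'), d' ≤ n →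
      comps φ hd' s ∉ LinearMap.range (comps φ (Nat.le_trans (Nat.sub_le b 1) hd'))

end Tower

/-!
Gluing stars adds only vertices and edges, never triangles. So every 2-chain of `K̃` already
lives in `K`, and a 1-cycle of `K` that bounds in `K̃` bounds the same 2-chain in `K`.
-/

namespace AbsSC

variable {α : Type} {K L : AbsSC α}

lemma chainMap_injective (h : K.faces ⊆ L.faces) (q : ℕ) :
    Function.Injective (chainMap K L h q) :=
  Finsupp.mapDomain_injective fun _ _ hst =>
    Subtype.ext (congrArg (fun t : L.simplices q => t.1) hst)

lemma chainMap_single (h : K.faces ⊆ L.faces) {q : ℕ} (s : K.simplices q) (b : ZMod 2) :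
    chainMap K L h q (Finsupp.single s b) =
      Finsupp.single (⟨s.1, h s.2.1, s.2.2⟩ : L.simplices q) b :=
  Finsupp.mapDomain_single

lemma chainMap_surjective (h : K.faces ⊆ L.faces) {q : ℕ}
    (hL : ∀ s ∈ L.faces, s.card = q + 1 → s ∈ K.faces) :
    Function.Surjective (chainMap K L h q) :=
  Finsupp.mapDomain_surjective fun s => ⟨⟨s.1, hL s.1 s.2.1 s.2.2, s.2.2⟩, rfl⟩

lemma boundary_single {q : ℕ} (s : K.simplices (q + 1)) (b : ZMod 2) :
    K.boundary q (Finsupp.single s b) = b • K.faceChain q s := by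
  rw [boundary, Finsupp.lsum_single, LinearMap.toSpanSingleton_apply]

lemma chainMap_comp_boundary (h : K.faces ⊆ L.faces) (q : ℕ) :
    (chainMap K L h q).comp (K.boundary q) = (L.boundary q).comp (chainMap K L h (q + 1)) := by
  refine Finsupp.lhom_ext fun s b => ?_
  rw [LinearMap.comp_apply, LinearMap.comp_apply, boundary_single, chainMap_single, map_smul]
  -- the `L`-simplex built by `chainMap` is typed as the unfolded subtype, hence `erw`
  erw [boundary_single]
  congr 1
  rw [faceChain, map_sum]
  exact Finset.sum_congr rfl fun _ _ => chainMap_single h _ _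

lemma InducedHom.injective {q : ℕ} {θ : K.Homology q →ₗ[ZMod 2] L.Homology q}
    (hθ : InducedHom K L q θ) (hL : ∀ s ∈ L.faces, s.card = q + 2 → s ∈ K.faces) :
    Function.Injective θ := by
  obtain ⟨h, hθ⟩ := hθ
  refine (injective_iff_map_eq_zero θ).mpr fun x hx => ?_
  obtain ⟨⟨c, hc⟩, rfl⟩ := Submodule.Quotient.mk_surjective _ x
  obtain ⟨hc', himage⟩ := hθ c hc
  obtain ⟨w, hw⟩ : chainMap K L h q c ∈ LinearMap.range (L.boundary q) :=
    (Submodule.Quotient.mk_eq_zero (L.boundariesIn q)).mp (himage.symm.trans hx)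
  obtain ⟨w', rfl⟩ := chainMap_surjective h hL w
  have hbound : K.boundary q w' = c := by
    apply chainMap_injective h q
    rw [← hw, ← LinearMap.comp_apply, chainMap_comp_boundary, LinearMap.comp_apply]
  exact (Submodule.Quotient.mk_eq_zero _).mpr ⟨w', hbound⟩

end AbsSC

lemma card_le_two_of_mem_starFaces {α : Type} [DecidableEq α] {k : ℕ} {P : Fin k → Set α}
    {z : Fin k → α} {s : Finset α} (hs : s ∈ starFaces P z) : s.card ≤ 2 := by
  obtain ⟨j, rfl | ⟨v, -, rfl | rfl⟩⟩ := hs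
  · simp
  · simp
  · exact Finset.card_le_two

theorem stmt7_general {α : Type} [DecidableEq α] (k : ℕ)
    (K Kt : AbsSC α)
    (P : Fin k → Set α)
    (z : Fin k → α)
    (hKt : Kt.faces = K.faces ∪ starFaces P z)
    (θ : K.Homology 1 →ₗ[ZMod 2] Kt.Homology 1)
    (hθ : AbsSC.InducedHom K Kt 1 θ) :
    Function.Injective θ := by
  refine hθ.injective fun s hs hcard => ?_
  rw [hKt] at hs
  exact hs.resolve_right fun hstar => by
    have := card_le_two_of_mem_starFaces hstar
    omega

/-- for a simplicial complex `K` with vertex set `V` partitioned into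
finitely many classes `P 0, …, P (k-1)`, new vertices `z 0, …, z (k-1)` not in `V`,
and `K̃ = K ∪ S` the union of `K` with the gluing stars, the map
`θ_1 : H_1(K) → H_1(K̃)` induced by the inclusion `K ⊆ K̃` is injective. -/
theorem stmt7 {α : Type} [DecidableEq α] (k : ℕ)
    (K Kt : AbsSC α)
    (P : Fin k → Set α)
    (hPne : ∀ j, (P j).Nonempty)
    (hPdisj : Pairwise (Function.onFun Disjoint P))
    (hPunion : (⋃ j, P j) = K.vertexSet)
    (z : Fin k → α)
    (hzinj : Function.Injective z)
    (hznew : ∀ j, z j ∉ K.vertexSet)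
    (hKt : Kt.faces = K.faces ∪ starFaces P z)
    (θ : K.Homology 1 →ₗ[ZMod 2] Kt.Homology 1)
    (hθ : AbsSC.InducedHom K Kt 1 θ) :
    Function.Injective θ :=
  stmt7_general k K Kt P z hKt θ hθ
end

section
/- If t ∈ H_0(K̃_b) is born at b in the sequence H_0(K̃_•) (i.e., t ∉ im(ψ_{b−1})), then there exists s ∈ H_0(K_b) with θ_{0,b}(s) = t such that s is born at b in the sequence H_0(K_•) (i.e., s ∉ im(φ_{b−1})). -/
/-!
A class in `H_0(K̃_b)` born at `b` lifts through `θ_b` once `θ_b` is surjective: if the lift were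
`φ_{b-1}(s')`, commutativity of the ladder would give `t = ψ_{b-1}(θ_{b-1} s')`. And `θ_b` is
surjective on `H_0` because `H_0(K̃_b)` is spanned by vertex classes, and every vertex of `K̃_b`
outside `K_b` is a star centre `z_j`, joined by an edge of `S_j` to a vertex of `V_{1,j} ⊆ V_b`.
-/

lemma comps_succ {W : ℕ → Type} [∀ i, AddCommGroup (W i)] [∀ i, Module (ZMod 2) (W i)]
    (φ : ∀ i, W i →ₗ[ZMod 2] W (i + 1)) {i : ℕ} (h : i ≤ i + 1) :
    comps φ h = φ i := by
  rw [comps, Nat.leRecOn_succ (Nat.le_refl i), Nat.leRecOn_self, LinearMap.comp_id]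

lemma LinearMap.exists_preimage_notMem_range_of_comp_eq {R A B C D : Type*} [Semiring R]
    [AddCommMonoid A] [AddCommMonoid B] [AddCommMonoid C] [AddCommMonoid D]
    [Module R A] [Module R B] [Module R C] [Module R D]
    {f : A →ₗ[R] B} {g : C →ₗ[R] D} {θA : A →ₗ[R] C} {θB : B →ₗ[R] D}
    (hsq : θB ∘ₗ f = g ∘ₗ θA) (hθB : Function.Surjective θB) {t : D} (ht : t ∉ range g) :
    ∃ s, θB s = t ∧ s ∉ range f := by
  obtain ⟨s, rfl⟩ := hθB t
  refine ⟨s, rfl, ?_⟩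
  rintro ⟨s', rfl⟩
  exact ht ⟨θA s', by rw [← LinearMap.comp_apply, ← hsq, LinearMap.comp_apply]⟩

namespace AbsSC

variable {α : Type}

lemma faces_subset_of_le {K : ℕ → AbsSC α} {n : ℕ}
    (hmono : ∀ i, i < n → (K i).faces ⊆ (K (i + 1)).faces) {i j : ℕ} (hij : i ≤ j)
    (hjn : j ≤ n) : (K i).faces ⊆ (K j).faces := by
  induction j, hij using Nat.le_induction with
  | base => exact subset_rfl
  | succ j _ ih => exact (ih (by omega)).trans (hmono j (by omega))

def vertexOf (K : AbsSC α) {v : α} (hv : {v} ∈ K.faces) : K.simplices 0 :=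
  ⟨{v}, hv, Finset.card_singleton v⟩

noncomputable def vertexClass (K : AbsSC α) (a : K.simplices 0) : K.Homology 0 :=
  K.hClass 0 (Finsupp.single a 1) Submodule.mem_top

lemma span_range_vertexClass (K : AbsSC α) :
    Submodule.span (ZMod 2) (Set.range K.vertexClass) = ⊤ := by
  refine Submodule.eq_top_iff'.mpr fun x => ?_
  obtain ⟨⟨c, hc⟩, rfl⟩ := Submodule.Quotient.mk_surjective _ x
  induction c using Finsupp.induction_linear with
  | zero => exact zero_mem _
  | add f g hf hg =>
    exact add_mem (hf Submodule.mem_top) (hg Submodule.mem_top)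
  | single a r =>
    have hsmul : (⟨Finsupp.single a r, hc⟩ : K.cycles 0) =
        r • ⟨Finsupp.single a 1, Submodule.mem_top⟩ :=
      Subtype.ext (by simp [Finsupp.smul_single])
    rw [hsmul, Submodule.Quotient.mk_smul]
    exact Submodule.smul_mem _ r (Submodule.subset_span ⟨a, rfl⟩)

lemma boundary_single_s9 (K : AbsSC α) (q : ℕ) (e : K.simplices (q + 1)) :
    K.boundary q (Finsupp.single e 1) = K.faceChain q e := by
  simp [boundary]

lemma faceChain_of_eq_pair [DecidableEq α] (K : AbsSC α) {v w : α} (hvw : v ≠ w)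
    (e : K.simplices 1) (he : e.1 = {v, w}) (hv : {v} ∈ K.faces) (hw : {w} ∈ K.faces) :
    K.faceChain 0 e = Finsupp.single (K.vertexOf hv) 1 + Finsupp.single (K.vertexOf hw) 1 := by
  classical
  have hsum : K.faceChain 0 e = ∑ u ∈ e.1.powersetCard 1,
      (if h : u ∈ K.faces ∧ u.card = 0 + 1 then
        Finsupp.single (⟨u, h⟩ : K.simplices 0) 1 else 0) := by
    rw [faceChain, ← Finset.sum_attach (e.1.powersetCard 1)]
    refine Finset.sum_congr rfl fun t _ => ?_
    obtain ⟨hsub, hcard⟩ := Finset.mem_powersetCard.mp t.2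
    rw [dif_pos ⟨K.down_closed e.2.1 hsub (by rw [← Finset.card_pos, hcard]; omega), hcard⟩]
    rfl
  have hfaces : ({v, w} : Finset α).powersetCard 1 = {{v}, {w}} := by
    simp [Finset.powersetCard_one]
  rw [hsum, he, hfaces, Finset.sum_pair (fun h => hvw (Finset.singleton_injective h)),
    dif_pos ⟨hv, Finset.card_singleton v⟩, dif_pos ⟨hw, Finset.card_singleton w⟩]
  rfl

lemma vertexClass_eq_of_pair_mem [DecidableEq α] (K : AbsSC α) {v w : α} (hvw : v ≠ w)
    (hv : {v} ∈ K.faces) (hw : {w} ∈ K.faces) (he : {v, w} ∈ K.faces) :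
    K.vertexClass (K.vertexOf hv) = K.vertexClass (K.vertexOf hw) := by
  let e : K.simplices 1 := ⟨{v, w}, he, Finset.card_pair hvw⟩
  refine (Submodule.Quotient.eq _).mpr ⟨Finsupp.single e 1, ?_⟩
  rw [boundary_single_s9, faceChain_of_eq_pair K hvw e rfl hv hw]
  exact (ZModModule.sub_eq_add _ _).symm

lemma InducedHom.vertexClass_mem_range {K L : AbsSC α}
    {θ : K.Homology 0 →ₗ[ZMod 2] L.Homology 0} (hθ : InducedHom K L 0 θ)
    (a : L.simplices 0) (ha : a.1 ∈ K.faces) : L.vertexClass a ∈ LinearMap.range θ := by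
  obtain ⟨hKL, hθc⟩ := hθ
  obtain ⟨_, hθa⟩ := hθc (Finsupp.single ⟨a.1, ha, a.2.2⟩ 1) Submodule.mem_top
  exact ⟨_, hθa.trans (congrArg _ (Subtype.ext Finsupp.mapDomain_single))⟩

def DominatesVertices [DecidableEq α] (K L : AbsSC α) : Prop :=
  ∀ v, {v} ∈ L.faces → {v} ∈ K.faces ∨ ∃ w, w ≠ v ∧ {w} ∈ K.faces ∧ {v, w} ∈ L.faces

lemma InducedHom.surjective_of_dominatesVertices [DecidableEq α] {K L : AbsSC α}
    {θ : K.Homology 0 →ₗ[ZMod 2] L.Homology 0} (hθ : InducedHom K L 0 θ)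
    (hL : K.DominatesVertices L) : Function.Surjective θ := by
  refine LinearMap.range_eq_top.mp (eq_top_iff.mpr ?_)
  rw [← L.span_range_vertexClass, Submodule.span_le]
  rintro _ ⟨⟨s, hs, hcard⟩, rfl⟩
  obtain ⟨v, rfl⟩ := Finset.card_eq_one.mp hcard
  obtain hvK | ⟨w, hwv, hwK, hvw⟩ := hL v hs
  · exact hθ.vertexClass_mem_range _ hvK
  · rw [SetLike.mem_coe, show ⟨{v}, hs, hcard⟩ = L.vertexOf hs from rfl,
      L.vertexClass_eq_of_pair_mem hwv.symm hs (hθ.1 hwK) hvw]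
    exact hθ.vertexClass_mem_range _ hwK

end AbsSC

lemma exists_eq_of_singleton_mem_starFaces {α : Type} [DecidableEq α] {k : ℕ}
    {P : Fin k → Set α} {z : Fin k → α} {v : α} (hv : {v} ∈ starFaces P z) :
    ∃ j, v = z j ∨ v ∈ P j := by
  obtain ⟨j, h | ⟨w, hw, h | h⟩⟩ := hv
  · exact ⟨j, Or.inl (Finset.singleton_inj.mp h)⟩
  · exact ⟨j, Or.inr (Finset.singleton_inj.mp h ▸ hw)⟩
  · exact ⟨j, Or.inl (Finset.mem_singleton.mp (h ▸ Finset.mem_insert_self _ _)).symm⟩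

lemma AbsSC.dominatesVertices_of_faces_eq_union_starFaces {α : Type} [DecidableEq α]
    {k : ℕ} {K L : AbsSC α} {P : Fin k → Set α} {z : Fin k → α} (hPK : ∀ j, P j ⊆ K.vertexSet)
    (hPne : ∀ j, (P j).Nonempty) (hL : L.faces = K.faces ∪ starFaces P z) :
    K.DominatesVertices L := by
  intro v hv
  rw [hL] at hv ⊢
  obtain hvK | hvS := hv
  · exact Or.inl hvK
  obtain ⟨j, rfl | hvP⟩ := exists_eq_of_singleton_mem_starFaces hvS
  · by_cases hzK : {z j} ∈ K.faces
    · exact Or.inl hzK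
    obtain ⟨w, hw⟩ := hPne j
    exact Or.inr ⟨w, fun h => hzK (h ▸ hPK j hw), hPK j hw, Or.inr ⟨j, Or.inr ⟨w, hw, Or.inr rfl⟩⟩⟩
  · exact Or.inl (hPK j hvP)

theorem stmt9_general {α : Type} [DecidableEq α] (n k : ℕ)
    (K Kt : ℕ → AbsSC α)
    (hKmono : ∀ i, i < n → (K i).faces ⊆ (K (i + 1)).faces)
    (P : Fin k → Set α)
    (hPne : ∀ j, (P j).Nonempty)
    (hPunion : (⋃ j, P j) = (K 1).vertexSet)
    (z : Fin k → α)
    (hKt : ∀ i, 1 ≤ i → i ≤ n → (Kt i).faces = (K i).faces ∪ starFaces P z)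
    (φ : ∀ i : ℕ, (K i).Homology 0 →ₗ[ZMod 2] (K (i + 1)).Homology 0)
    (ψ : ∀ i : ℕ, (Kt i).Homology 0 →ₗ[ZMod 2] (Kt (i + 1)).Homology 0)
    (θ : ∀ i : ℕ, (K i).Homology 0 →ₗ[ZMod 2] (Kt i).Homology 0)
    (hθ : ∀ i, i ≤ n → AbsSC.InducedHom (K i) (Kt i) 0 (θ i))
    (hsq : ∀ i, i < n → (θ (i + 1)).comp (φ i) = (ψ i).comp (θ i))
    (b : ℕ) (hb1 : 1 ≤ b) (hbn : b ≤ n)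
    (t : (Kt b).Homology 0)
    (ht : t ∉ LinearMap.range (comps ψ (Nat.sub_le b 1))) :
    ∃ s : (K b).Homology 0,
      θ b s = t ∧ s ∉ LinearMap.range (comps φ (Nat.sub_le b 1)) := by
  have hPK : ∀ j, P j ⊆ (K b).vertexSet := fun j =>
    (hPunion ▸ Set.subset_iUnion P j : P j ⊆ (K 1).vertexSet).trans
      fun _ hv => AbsSC.faces_subset_of_le hKmono hb1 hbn hv
  have hθsurj : Function.Surjective (θ b) := (hθ b hbn).surjective_of_dominatesVertices
    (AbsSC.dominatesVertices_of_faces_eq_union_starFaces hPK hPne (hKt b hb1 hbn))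
  obtain ⟨m, rfl⟩ : ∃ m, b = m + 1 := ⟨b - 1, by omega⟩
  rw [comps_succ] at ht ⊢
  exact LinearMap.exists_preimage_notMem_range_of_comp_eq (hsq m (by omega)) hθsurj ht

/-- in the commutative ladder of 0-th homologies of the filtrations
`K_•` and `K̃_• = K_• ∪ S`, if `t ∈ H_0(K̃_b)` is born at `b` (i.e. `t ∉ im ψ_{b-1}`),
then there exists `s ∈ H_0(K_b)` with `θ_{0,b}(s) = t` which is born at `b`
(i.e. `s ∉ im φ_{b-1}`). -/
theorem stmt9 {α : Type} [DecidableEq α] (n k : ℕ)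
    (K Kt : ℕ → AbsSC α)
    (hK0 : (K 0).faces = ∅)
    (hKt0 : (Kt 0).faces = ∅)
    (hKmono : ∀ i, i < n → (K i).faces ⊆ (K (i + 1)).faces)
    (hKtmono : ∀ i, i < n → (Kt i).faces ⊆ (Kt (i + 1)).faces)
    (P : Fin k → Set α)
    (hPne : ∀ j, (P j).Nonempty)
    (hPdisj : Pairwise (Function.onFun Disjoint P))
    (hPunion : (⋃ j, P j) = (K 1).vertexSet)
    (z : Fin k → α)
    (hzinj : Function.Injective z)
    (hznew : ∀ (j : Fin k) (i : ℕ), i ≤ n → z j ∉ (K i).vertexSet)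
    (hKt : ∀ i, 1 ≤ i → i ≤ n → (Kt i).faces = (K i).faces ∪ starFaces P z)
    (φ : ∀ i : ℕ, (K i).Homology 0 →ₗ[ZMod 2] (K (i + 1)).Homology 0)
    (ψ : ∀ i : ℕ, (Kt i).Homology 0 →ₗ[ZMod 2] (Kt (i + 1)).Homology 0)
    (θ : ∀ i : ℕ, (K i).Homology 0 →ₗ[ZMod 2] (Kt i).Homology 0)
    (hφ : ∀ i, i < n → AbsSC.InducedHom (K i) (K (i + 1)) 0 (φ i))
    (hψ : ∀ i, i < n → AbsSC.InducedHom (Kt i) (Kt (i + 1)) 0 (ψ i))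
    (hθ : ∀ i, i ≤ n → AbsSC.InducedHom (K i) (Kt i) 0 (θ i))
    (hsq : ∀ i, i < n → (θ (i + 1)).comp (φ i) = (ψ i).comp (θ i))
    (b : ℕ) (hb1 : 1 ≤ b) (hbn : b ≤ n)
    (t : (Kt b).Homology 0)
    (ht : t ∉ LinearMap.range (comps ψ (Nat.sub_le b 1))) :
    ∃ s : (K b).Homology 0,
      θ b s = t ∧ s ∉ LinearMap.range (comps φ (Nat.sub_le b 1)) :=
  stmt9_general n k K Kt hKmono P hPne hPunion z hKt φ ψ θ hθ hsq b hb1 hbn t ht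
end
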